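/- A CM-order A admits exactly one automorphism σ with the property that ψ(σ(x)) equals the complex conjugate of ψ(x) for all x ∈ A and all ring homomorphisms ψ : A → ℂ, and this automorphism is an involution: σ(σ(x)) = x for all x. -/

import Mathlib

/-!
Both claims say that two elements of `A` agree under every `ψ : A →+* ℂ`, so it suffices that
these homomorphisms separate the points of `A`. In a reduced ring the minimal primes meet in `0`;
a minimal prime of a torsion-free ring consists of zero divisors, so it contains no nonzero
integer, and the quotient is a characteristic-zero domain integral over `ℤ`. Its fraction field
is algebraic over `ℚ`, hence embeds into `ℂ`.
-/

theorem natCast_mem_nonZeroDivisors_of_isTorsionFree (A : Type*) [CommRing A]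
    [Module.IsTorsionFree ℤ A] {n : ℕ} (hn : n ≠ 0) : (n : A) ∈ nonZeroDivisors A := by
  rw [mem_nonZeroDivisors_iff_right]
  intro y hy
  rw [mul_comm, ← Int.cast_natCast, ← zsmul_eq_mul, smul_eq_zero] at hy
  simpa [hn] using hy

theorem Ideal.charZero_quotient_of_mem_minimalPrimes {A : Type*} [CommRing A]
    [Module.IsTorsionFree ℤ A] {p : Ideal A} (hp : p ∈ minimalPrimes A) : CharZero (A ⧸ p) := by
  refine charZero_of_inj_zero fun n hn => ?_
  by_contra hn0
  rw [← map_natCast (Ideal.Quotient.mk p), Ideal.Quotient.eq_zero_iff_mem] at hn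
  exact notMem_nonZeroDivisors_of_mem_mem_minimalPrimes hn hp
    (natCast_mem_nonZeroDivisors_of_isTorsionFree A hn0)

theorem Ideal.exists_ringHom_complex_ker_eq {A : Type*} [CommRing A] [Algebra.IsIntegral ℤ A]
    (p : Ideal A) [p.IsPrime] [CharZero (A ⧸ p)] : ∃ ψ : A →+* ℂ, RingHom.ker ψ = p := by
  let K := FractionRing (A ⧸ p)
  have : Algebra.IsAlgebraic ℤ K :=
    (IsFractionRing.isAlgebraic_iff' ℤ (A ⧸ p) K).1 Algebra.IsIntegral.isAlgebraic
  let f : K →+* ℂ := (IsAlgClosed.lift : K →ₐ[ℤ] ℂ)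
  have hf : Function.Injective (f.comp (algebraMap (A ⧸ p) K)) :=
    f.injective.comp (IsFractionRing.injective _ K)
  exact ⟨_, (RingHom.ker_comp_of_injective (Ideal.Quotient.mk p) hf).trans Ideal.mk_ker⟩

theorem exists_ringHom_complex_apply_ne_zero {A : Type*} [CommRing A] [IsReduced A]
    [Module.IsTorsionFree ℤ A] [Algebra.IsIntegral ℤ A] {x : A} (hx : x ≠ 0) :
    ∃ ψ : A →+* ℂ, ψ x ≠ 0 := by
  obtain ⟨p, hp, hxp⟩ : ∃ p ∈ minimalPrimes A, x ∉ p := by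
    by_contra! h
    have hx_mem : x ∈ sInf (minimalPrimes A) := Ideal.mem_sInf.2 fun _ hp => h _ hp
    rw [Ideal.sInf_minimalPrimes, Ideal.radical_bot_of_isReduced] at hx_mem
    exact hx hx_mem
  have := hp.isPrime
  have := Ideal.charZero_quotient_of_mem_minimalPrimes hp
  obtain ⟨ψ, hψ⟩ := p.exists_ringHom_complex_ker_eq
  exact ⟨ψ, fun hψx => hxp (hψ ▸ RingHom.mem_ker.2 hψx)⟩

theorem eq_of_forall_ringHom_complex_apply_eq {A : Type*} [CommRing A] [IsReduced A]
    [Module.IsTorsionFree ℤ A] [Algebra.IsIntegral ℤ A] {x y : A}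
    (h : ∀ ψ : A →+* ℂ, ψ x = ψ y) : x = y := by
  by_contra hxy
  obtain ⟨ψ, hψ⟩ := exists_ringHom_complex_apply_ne_zero (sub_ne_zero.2 hxy)
  exact hψ (by rw [map_sub, h, sub_self])

/-- A CM-order admits exactly one automorphism `σ` with `ψ(σ x) = conj (ψ x)` for
all ring homomorphisms `ψ : A → ℂ`, and any such automorphism is an involution. -/
theorem stmt4 (A : Type*) [CommRing A] [IsReduced A]
    [Module.Free ℤ A] [Module.Finite ℤ A]
    (σ τ : A ≃+* A)
    (hσ : ∀ (ψ : A →+* ℂ) (x : A), ψ (σ x) = starRingEnd ℂ (ψ x))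
    (hτ : ∀ (ψ : A →+* ℂ) (x : A), ψ (τ x) = starRingEnd ℂ (ψ x)) :
    σ = τ ∧ ∀ x : A, σ (σ x) = x := by
  refine ⟨RingEquiv.ext fun x => ?_, fun x => ?_⟩ <;>
    refine eq_of_forall_ringHom_complex_apply_eq fun ψ => ?_
  · rw [hσ, hτ]
  · rw [hσ, hσ, Complex.conj_conj]
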